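/- arXiv:1608.06160 — 3 statements merged into one kernel-verified Lean document; each statement's English description precedes it below -/
import Mathlib

section
/- For every real ε > 0 there exists a constant C = C(ε) such that for all integers q and K with 1 ≤ K ≤ q, the number R₂(q;K) of solutions (x₁, x₂, x₃, x₄) with 1 ≤ x_i ≤ K of the congruence x₁ x₂ ≡ x₃ x₄ (mod q) satisfies R₂(q;K) ≤ C (K⁴ q^{-1} + K²) q^ε. -/
open Finset Real

/-! Send `(x₁, x₂, x₃, x₄)` to `(x₁, x₂, x₃ x₄)`. The image consists of triples `(a, b, m)` with
`m ≤ K²` and `m ≡ a b (mod q)`, at most `K² (K² / q + 1)` of them, and the fibre over `(a, b, m)`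
has at most `d(m)` points. The divisor bound `d(m) ≤ C m^(ε/2)` together with `m ≤ q²` gives the
factor `q^ε`; it follows from `d(n) = ∏ (aₚ + 1)`, where `aₚ + 1 ≤ (p^aₚ)^δ` as soon as `p^δ ≥ 2`,
and each of the finitely many remaining primes costs a bounded factor. -/

theorem natCast_add_one_le_rpow_pow {x δ : ℝ} (hx : 0 ≤ x) (hxδ : 2 ≤ x ^ δ) (a : ℕ) :
    (a + 1 : ℝ) ≤ (x ^ a) ^ δ :=
  calc (a + 1 : ℝ) ≤ 2 ^ a := by exact_mod_cast Nat.lt_two_pow_self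
    _ ≤ (x ^ δ) ^ a := pow_le_pow_left₀ zero_le_two hxδ a
    _ = (x ^ a) ^ δ := rpow_pow_comm hx δ a

theorem natCast_add_one_le_mul_rpow_pow {x δ : ℝ} (hx : 2 ≤ x) (hδ : 0 < δ) (a : ℕ) :
    (a + 1 : ℝ) ≤ (1 + (δ * log 2)⁻¹) * (x ^ a) ^ δ := by
  set L := δ * log 2
  have hL : 0 < L := mul_pos hδ (log_pos one_lt_two)
  have hgrowth : 1 + a * L ≤ (x ^ a) ^ δ :=
    calc 1 + a * L ≤ 1 + log x * (a * δ) := by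
          have : log 2 ≤ log x := log_le_log two_pos hx
          simp only [L]
          nlinarith [mul_nonneg (Nat.cast_nonneg a) hδ.le]
      _ ≤ exp (log x * (a * δ)) := by linarith [add_one_le_exp (log x * (a * δ))]
      _ = (x ^ a) ^ δ := by rw [← rpow_def_of_pos (by linarith), rpow_natCast_mul (by linarith)]
  have hexpand : (1 + L⁻¹) * (1 + a * L) = a + 1 + (a * L + L⁻¹) := by field_simp; ring
  calc (a + 1 : ℝ) ≤ (1 + L⁻¹) * (1 + a * L) := by
        rw [hexpand]; linarith [inv_pos.2 hL, mul_nonneg (Nat.cast_nonneg a) hL.le]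
    _ ≤ (1 + L⁻¹) * (x ^ a) ^ δ := by gcongr

theorem card_divisors_le_rpow {δ : ℝ} (hδ : 0 < δ) :
    ∃ C : ℝ, ∀ n : ℕ, (#n.divisors : ℝ) ≤ C * (n : ℝ) ^ δ := by
  set M := 1 + (δ * log 2)⁻¹
  have hM : 1 ≤ M := le_add_of_nonneg_right (inv_nonneg.2 (mul_pos hδ (log_pos one_lt_two)).le)
  -- Only the primes `p ≤ T` can have `p ^ δ < 2`, and only they pay the factor `M`.
  set T := ⌈(2 : ℝ) ^ δ⁻¹⌉₊
  refine ⟨M ^ (T + 1), fun n => ?_⟩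
  rcases eq_or_ne n 0 with rfl | hn
  · simp [zero_rpow hδ.ne']
  set c : ℕ → ℝ := fun p => if p ≤ T then M else 1
  have hfactor : ∀ p ∈ n.primeFactors,
      ((n.factorization p + 1 : ℕ) : ℝ) ≤ c p * ((p : ℝ) ^ n.factorization p) ^ δ := by
    intro p hp
    have hp2 : (2 : ℝ) ≤ p := by exact_mod_cast (Nat.prime_of_mem_primeFactors hp).two_le
    push_cast
    by_cases hpT : p ≤ T
    · simp only [c, if_pos hpT]
      exact natCast_add_one_le_mul_rpow_pow hp2 hδ (n.factorization p)
    · have hpδ : 2 ≤ (p : ℝ) ^ δ :=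
        calc (2 : ℝ) = ((2 : ℝ) ^ δ⁻¹) ^ δ := by
              rw [← rpow_mul zero_le_two, inv_mul_cancel₀ hδ.ne', rpow_one]
          _ ≤ (p : ℝ) ^ δ := by
            gcongr
            exact (Nat.le_ceil _).trans (by exact_mod_cast (not_le.1 hpT).le)
      simp only [c, if_neg hpT, one_mul]
      exact natCast_add_one_le_rpow_pow (by linarith) hpδ (n.factorization p)
  have hsmall : ∏ p ∈ n.primeFactors, c p ≤ M ^ (T + 1) := by
    rw [prod_ite, prod_const, prod_const_one, mul_one]
    refine pow_le_pow_right₀ hM ((card_le_card fun p hp => ?_).trans (card_range (T + 1)).le)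
    exact mem_range.2 (Nat.lt_succ_of_le (mem_filter.1 hp).2)
  have hprod : ∏ p ∈ n.primeFactors, (p : ℝ) ^ n.factorization p = n := by
    exact_mod_cast (Nat.prod_primeFactors_pow_factorization hn).symm
  calc (#n.divisors : ℝ) = ∏ p ∈ n.primeFactors, ((n.factorization p + 1 : ℕ) : ℝ) := by
        rw [Nat.card_divisors hn, Nat.cast_prod]
    _ ≤ ∏ p ∈ n.primeFactors, c p * ((p : ℝ) ^ n.factorization p) ^ δ :=
        prod_le_prod (fun _ _ => by positivity) hfactor
    _ = (∏ p ∈ n.primeFactors, c p) * (n : ℝ) ^ δ := by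
        rw [prod_mul_distrib, finsetProd_rpow _ _ (fun _ _ => by positivity), hprod]
    _ ≤ M ^ (T + 1) * (n : ℝ) ^ δ := by gcongr

theorem card_filter_modEq_Iic_le (N q r : ℕ) :
    #{m ∈ Iic N | m ≡ r [MOD q]} ≤ N / q + 1 := by
  calc #{m ∈ Iic N | m ≡ r [MOD q]} ≤ #(range (N / q + 1)) := by
        refine card_le_card_of_injOn (· / q) (fun m hm => ?_) (fun m hm m' hm' hdiv => ?_)
        · simp only [coe_filter, mem_Iic, Set.mem_ofPred_eq] at hm
          simpa [Nat.lt_succ_iff] using Nat.div_le_div_right hm.1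
        · simp only [coe_filter, mem_Iic, Set.mem_ofPred_eq] at hm hm'
          have hmod : m % q = m' % q := hm.2.trans hm'.2.symm
          rw [← Nat.div_add_mod m q, ← Nat.div_add_mod m' q, hmod]
          exact congrArg (q * · + m' % q) hdiv
    _ = N / q + 1 := card_range _

theorem card_filter_mul_eq_le_card_divisors (s : Finset (ℕ × ℕ)) {m : ℕ} (hm : m ≠ 0) :
    #{y ∈ s | y.1 * y.2 = m} ≤ #m.divisors := by
  calc #{y ∈ s | y.1 * y.2 = m} ≤ #m.divisorsAntidiagonal :=
        card_le_card fun y hy => Nat.mem_divisorsAntidiagonal.2 ⟨(mem_filter.1 hy).2, hm⟩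
    _ = #m.divisors := by rw [← Nat.map_div_right_divisors, card_map]

theorem card_filter_mul_modEq_le (K q r D : ℕ) (hD : ∀ m ≤ K * K, #m.divisors ≤ D) :
    #{y ∈ Icc 1 K ×ˢ Icc 1 K | y.1 * y.2 ≡ r [MOD q]} ≤ D * (K * K / q + 1) := by
  calc #{y ∈ Icc 1 K ×ˢ Icc 1 K | y.1 * y.2 ≡ r [MOD q]}
      ≤ D * #{m ∈ Icc 1 (K * K) | m ≡ r [MOD q]} := by
        refine card_le_mul_card_image_of_maps_to (f := fun y => y.1 * y.2) (fun y hy => ?_) D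
          fun m hm => ?_
        · simp only [mem_filter, mem_product, mem_Icc] at hy ⊢
          exact ⟨⟨Nat.mul_pos hy.1.1.1 hy.1.2.1, Nat.mul_le_mul hy.1.1.2 hy.1.2.2⟩, hy.2⟩
        · simp only [mem_filter, mem_Icc] at hm
          calc #{y ∈ {y ∈ Icc 1 K ×ˢ Icc 1 K | y.1 * y.2 ≡ r [MOD q]} | y.1 * y.2 = m}
              ≤ #{y ∈ Icc 1 K ×ˢ Icc 1 K | y.1 * y.2 = m} :=
                card_le_card (filter_subset_filter _ (filter_subset _ _))
            _ ≤ #m.divisors := card_filter_mul_eq_le_card_divisors _ (by omega)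
            _ ≤ D := hD m hm.1.2
    _ ≤ D * (K * K / q + 1) := by
        gcongr
        exact (card_le_card (filter_subset_filter _ Icc_subset_Iic_self)).trans
          (card_filter_modEq_Iic_le _ _ _)

theorem card_filter_mul_modEq_mul_le (K q D : ℕ) (hD : ∀ m ≤ K * K, #m.divisors ≤ D) :
    #{x ∈ Icc 1 K ×ˢ Icc 1 K ×ˢ Icc 1 K ×ˢ Icc 1 K |
        x.1 * x.2.1 ≡ x.2.2.1 * x.2.2.2 [MOD q]} ≤ D * (K * K / q + 1) * (K * K) := by
  refine (card_le_mul_card_image_of_maps_to (f := fun x => (x.1, x.2.1))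
    (t := Icc 1 K ×ˢ Icc 1 K) (fun x hx => ?_) (D * (K * K / q + 1)) fun ab _ => ?_).trans_eq
      (by simp)
  · simp only [mem_filter, mem_product] at hx ⊢
    exact ⟨hx.1.1, hx.1.2.1⟩
  calc #{x ∈ {x ∈ Icc 1 K ×ˢ Icc 1 K ×ˢ Icc 1 K ×ˢ Icc 1 K |
          x.1 * x.2.1 ≡ x.2.2.1 * x.2.2.2 [MOD q]} | (x.1, x.2.1) = ab}
      ≤ #{y ∈ Icc 1 K ×ˢ Icc 1 K | y.1 * y.2 ≡ ab.1 * ab.2 [MOD q]} := by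
        refine card_le_card_of_injOn (·.2.2) (fun x hx => ?_) (fun x hx x' hx' h => ?_)
        · simp only [coe_filter, mem_filter, mem_product, Set.mem_ofPred_eq] at hx
          obtain ⟨⟨⟨-, -, hcd⟩, hmod⟩, rfl⟩ := hx
          exact mem_filter.2 ⟨mem_product.2 hcd, hmod.symm⟩
        · simp only [coe_filter, Set.mem_ofPred_eq] at hx hx'
          have h12 := hx.2.trans hx'.2.symm
          simp only [Prod.mk.injEq] at h12
          exact Prod.ext h12.1 (Prod.ext h12.2 h)
    _ ≤ D * (K * K / q + 1) := card_filter_mul_modEq_le K q _ D hD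

/-- Lemma (Friedlander–Iwaniec): for every `ε > 0` there is a constant `C` such that for all
`1 ≤ K ≤ q`, the number `R₂(q;K)` of quadruples `(x₁,x₂,x₃,x₄)` with `1 ≤ xᵢ ≤ K` and
`x₁ x₂ ≡ x₃ x₄ (mod q)` satisfies `R₂(q;K) ≤ C (K⁴ q^{-1} + K²) q^ε`. -/
theorem product_congruence_count_bound (ε : ℝ) (hε : 0 < ε) :
    ∃ C : ℝ, ∀ q K : ℕ, 1 ≤ K → K ≤ q →
      (Set.ncard {x : ℕ × ℕ × ℕ × ℕ |
          (1 ≤ x.1 ∧ x.1 ≤ K) ∧ (1 ≤ x.2.1 ∧ x.2.1 ≤ K) ∧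
          (1 ≤ x.2.2.1 ∧ x.2.2.1 ≤ K) ∧ (1 ≤ x.2.2.2 ∧ x.2.2.2 ≤ K) ∧
          ((x.1 * x.2.1 : ℕ) : ZMod q) = ((x.2.2.1 * x.2.2.2 : ℕ) : ZMod q)} : ℝ) ≤
        C * ((K : ℝ) ^ 4 * (q : ℝ)⁻¹ + (K : ℝ) ^ 2) * (q : ℝ) ^ ε := by
  obtain ⟨C, hC⟩ := card_divisors_le_rpow (half_pos hε)
  have hC0 : 0 ≤ C := zero_le_one.trans (by simpa using hC 1)
  refine ⟨C, fun q K _ hKq => ?_⟩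
  have hdiv : ∀ m ≤ K * K, (#m.divisors : ℝ) ≤ C * (q : ℝ) ^ ε := fun m hm =>
    calc (#m.divisors : ℝ) ≤ C * (m : ℝ) ^ (ε / 2) := hC m
      _ ≤ C * ((q : ℝ) ^ 2) ^ (ε / 2) := by
          gcongr
          exact_mod_cast hm.trans (Nat.mul_le_mul hKq hKq) |>.trans_eq (sq q).symm
      _ = C * (q : ℝ) ^ ε := by
          rw [← rpow_natCast_mul (Nat.cast_nonneg q)]; congr 2; push_cast; ring
  have hcount := card_filter_mul_modEq_mul_le K q ⌊C * (q : ℝ) ^ ε⌋₊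
    fun m hm => Nat.le_floor (hdiv m hm)
  rw [← Set.ncard_coe_finset] at hcount
  refine (Nat.cast_le.2 ((congrArg Set.ncard ?_).trans_le hcount)).trans ?_
  · ext x
    simp only [coe_filter, mem_product, mem_Icc, Set.mem_ofPred_eq,
      ← ZMod.natCast_eq_natCast_iff, and_assoc]
  push_cast
  calc (⌊C * (q : ℝ) ^ ε⌋₊ : ℝ) * (((K * K / q : ℕ) : ℝ) + 1) * (K * K)
      ≤ (C * (q : ℝ) ^ ε) * (K * K / q + 1) * (K * K) := by
        gcongr
        · exact Nat.floor_le (by positivity)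
        · exact_mod_cast Nat.cast_div_le
    _ = C * ((K : ℝ) ^ 4 * (q : ℝ)⁻¹ + (K : ℝ) ^ 2) * (q : ℝ) ^ ε := by ring
end

section
/- Fix a positive integer r. For every real ε > 0 there exists a constant C = C(r, ε) such that for every positive integer K, the number R_r(K) of solutions (x₁, ..., x_{2r}) of integers with 1 ≤ x₁, ..., x_{2r} ≤ K of the equation x₁ ⋯ x_r = x_{r+1} ⋯ x_{2r} satisfies R_r(K) ≤ C K^{r + ε}. -/
/-!
Fix `x₁, …, x_r`; their product `n` is at most `K^r`, and each of `x_{r+1}, …, x_{2r}` divides `n`,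
so there are at most `d(n)^r` ways to complete the tuple. The divisor bound `d(n) ≤ C_δ n^δ` then
gives `R_r(K) ≤ K^r · C_δ^r K^{r²δ}`.

For the divisor bound write `d(n) / n^δ = ∏_{p^a ∥ n} (a + 1) / p^{aδ}`. A prime with `p^δ ≥ 2`
contributes at most `1`, since `a + 1 ≤ 2^a`. Every other prime is below `2^{1/δ}`, and contributes
at most `max 1 (δ log 2)⁻¹`, since `a + 1 ≤ max 1 (δ log 2)⁻¹ · 2^{aδ}` by `1 + t ≤ exp t`.
-/

open Finset

/-- `R_r(K)`: the number of `2r`-tuples `(x₁, …, x_{2r})` of integers with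
`1 ≤ x₁, …, x_{2r} ≤ K` satisfying `x₁ ⋯ x_r = x_{r+1} ⋯ x_{2r}`. The tuple is encoded as
a pair of `r`-tuples. -/
noncomputable def productEqCount (r K : ℕ) : ℕ :=
  Set.ncard {p : (Fin r → ℕ) × (Fin r → ℕ) |
    (∀ i, 1 ≤ p.1 i ∧ p.1 i ≤ K) ∧ (∀ i, 1 ≤ p.2 i ∧ p.2 i ≤ K) ∧
    ∏ i, p.1 i = ∏ i, p.2 i}

open Real

lemma succ_le_mul_two_rpow {δ : ℝ} (hδ : 0 < δ) (a : ℕ) :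
    (a + 1 : ℝ) ≤ max 1 (δ * log 2)⁻¹ * 2 ^ (a * δ) := by
  have hc : 0 < δ * log 2 := mul_pos hδ (log_pos one_lt_two)
  have hMc : 1 ≤ max 1 (δ * log 2)⁻¹ * (δ * log 2) :=
    (inv_mul_cancel₀ hc.ne').ge.trans (by gcongr; exact le_max_right _ _)
  have hexp : a * (δ * log 2) + 1 ≤ (2 : ℝ) ^ (a * δ) := by
    rw [rpow_def_of_pos two_pos, mul_comm (log 2), mul_assoc]
    exact add_one_le_exp _
  have ha : (0 : ℝ) ≤ a := a.cast_nonneg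
  nlinarith [mul_le_mul_of_nonneg_left hexp (zero_le_one.trans (le_max_left 1 (δ * log 2)⁻¹)),
    mul_le_mul_of_nonneg_left hMc ha, le_max_left 1 (δ * log 2)⁻¹]

lemma succ_le_rpow_of_two_le_rpow {x δ : ℝ} (hx : 0 ≤ x) (h : 2 ≤ x ^ δ) (a : ℕ) :
    (a + 1 : ℝ) ≤ x ^ (a * δ) :=
  calc (a + 1 : ℝ) ≤ 2 ^ a := by exact_mod_cast a.lt_two_pow_self
    _ ≤ (x ^ δ) ^ a := by gcongr
    _ = x ^ (a * δ) := by rw [mul_comm, rpow_mul_natCast hx]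

lemma succ_le_ite_mul_rpow {x δ : ℝ} (hx : 2 ≤ x) (hδ : 0 < δ) (a : ℕ) :
    (a + 1 : ℝ) ≤ (if x ^ δ < 2 then max 1 (δ * log 2)⁻¹ else 1) * x ^ (a * δ) := by
  split_ifs with hsmall
  · exact (succ_le_mul_two_rpow hδ a).trans (by gcongr)
  · rw [one_mul]
    exact succ_le_rpow_of_two_le_rpow (by linarith) (not_lt.mp hsmall) a

lemma Nat.prod_primeFactors_rpow_factorization {n : ℕ} (hn : n ≠ 0) (δ : ℝ) :
    ∏ p ∈ n.primeFactors, (p : ℝ) ^ (n.factorization p * δ) = (n : ℝ) ^ δ := by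
  simp_rw [rpow_natCast_mul (Nat.cast_nonneg _)]
  rw [finsetProd_rpow _ _ (fun p _ => by positivity)]
  exact_mod_cast congrArg (fun m : ℕ => (m : ℝ) ^ δ) (Nat.prod_factorization_pow_eq_self hn)

lemma card_filter_rpow_lt_two_le {δ : ℝ} (hδ : 0 < δ) (s : Finset ℕ) :
    #(s.filter fun p : ℕ => (p : ℝ) ^ δ < 2) ≤ ⌈(2 : ℝ) ^ δ⁻¹⌉₊ := by
  calc #(s.filter fun p : ℕ => (p : ℝ) ^ δ < 2) ≤ #(range ⌈(2 : ℝ) ^ δ⁻¹⌉₊) := by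
        refine card_le_card fun p hp => mem_range.mpr ?_
        have hp : (p : ℝ) < 2 ^ δ⁻¹ :=
          (lt_rpow_inv_iff_of_pos p.cast_nonneg zero_le_two hδ).mpr (mem_filter.mp hp).2
        exact_mod_cast hp.trans_le (Nat.le_ceil _)
    _ = ⌈(2 : ℝ) ^ δ⁻¹⌉₊ := card_range _

theorem Nat.exists_card_divisors_le_mul_rpow {δ : ℝ} (hδ : 0 < δ) :
    ∃ C : ℝ, 0 ≤ C ∧ ∀ n : ℕ, n ≠ 0 → (#n.divisors : ℝ) ≤ C * (n : ℝ) ^ δ := by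
  set M : ℝ := max 1 (δ * Real.log 2)⁻¹
  have hM : 1 ≤ M := le_max_left _ _
  refine ⟨M ^ ⌈(2 : ℝ) ^ δ⁻¹⌉₊, by positivity, fun n hn => ?_⟩
  have hsmall : ∏ p ∈ n.primeFactors, (if (p : ℝ) ^ δ < 2 then M else 1)
      ≤ M ^ ⌈(2 : ℝ) ^ δ⁻¹⌉₊ := by
    rw [prod_ite, prod_const, prod_const, one_pow, mul_one]
    exact pow_le_pow_right₀ hM (card_filter_rpow_lt_two_le hδ _)
  calc (#n.divisors : ℝ) = ∏ p ∈ n.primeFactors, ((n.factorization p : ℝ) + 1) := by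
        rw [Nat.card_divisors hn]; push_cast; rfl
    _ ≤ ∏ p ∈ n.primeFactors,
          (if (p : ℝ) ^ δ < 2 then M else 1) * (p : ℝ) ^ (n.factorization p * δ) :=
        prod_le_prod (fun _ _ => by positivity) fun p hp =>
          succ_le_ite_mul_rpow (x := p) (mod_cast (Nat.prime_of_mem_primeFactors hp).two_le) hδ _
    _ ≤ M ^ ⌈(2 : ℝ) ^ δ⁻¹⌉₊ * (n : ℝ) ^ δ := by
        rw [prod_mul_distrib, Nat.prod_primeFactors_rpow_factorization hn]
        gcongr

lemma card_filter_product_apply_eq_le {α β : Type*} [DecidableEq β] (s : Finset α) (f : α → β)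
    {B : ℝ} (h : ∀ x ∈ s, (#{y ∈ s | f y = f x} : ℝ) ≤ B) :
    (#{p ∈ s ×ˢ s | f p.1 = f p.2} : ℝ) ≤ #s * B := by
  have hfib : #{p ∈ s ×ˢ s | f p.1 = f p.2} = ∑ x ∈ s, #{y ∈ s | f y = f x} := by
    simp only [card_filter, sum_product]
    exact sum_congr rfl fun x _ => sum_congr rfl fun y _ => by simp only [eq_comm]
  rw [hfib, Nat.cast_sum, ← nsmul_eq_mul]
  exact sum_le_card_nsmul s _ B h

lemma card_filter_prod_eq_le {ι : Type*} [Fintype ι] [DecidableEq ι] (s : Finset (ι → ℕ))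
    {n : ℕ} (hn : n ≠ 0) : #{y ∈ s | ∏ i, y i = n} ≤ #n.divisors ^ Fintype.card ι := by
  calc #{y ∈ s | ∏ i, y i = n} ≤ #(Fintype.piFinset fun _ : ι => n.divisors) := by
        refine card_le_card fun y hy => Fintype.mem_piFinset.mpr fun i => ?_
        rw [Nat.mem_divisors, ← (mem_filter.mp hy).2]
        exact ⟨dvd_prod_of_mem y (mem_univ i), (mem_filter.mp hy).2 ▸ hn⟩
    _ = #n.divisors ^ Fintype.card ι := by simp

lemma prod_mem_Icc_of_mem_piFinset {ι : Type*} [Fintype ι] [DecidableEq ι] {K : ℕ}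
    {x : ι → ℕ} (hx : x ∈ Fintype.piFinset fun _ => Icc 1 K) :
    ∏ i, x i ∈ Icc 1 (K ^ Fintype.card ι) := by
  simp only [Fintype.mem_piFinset, mem_Icc] at hx
  exact mem_Icc.mpr ⟨one_le_prod' fun i _ => (hx i).1,
    by simpa using prod_le_pow_card univ x K fun i _ => (hx i).2⟩

lemma productEqCount_eq_card (r K : ℕ) :
    productEqCount r K = #{p ∈ (Fintype.piFinset fun _ : Fin r => Icc 1 K) ×ˢ
      (Fintype.piFinset fun _ : Fin r => Icc 1 K) | ∏ i, p.1 i = ∏ i, p.2 i} := by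
  rw [productEqCount, ← Set.ncard_coe_finset]
  congr 1
  ext p
  simp only [coe_filter, Set.mem_ofPred_eq, mem_product, Fintype.mem_piFinset, mem_Icc]
  tauto

theorem product_equation_count_bound_general (r : ℕ) (ε : ℝ) (hε : 0 < ε) :
    ∃ C : ℝ, ∀ K : ℕ, 1 ≤ K →
      (productEqCount r K : ℝ) ≤ C * (K : ℝ) ^ ((r : ℝ) + ε) := by
  set δ := ε / (r ^ 2 + 1)
  obtain ⟨C, hC0, hC⟩ := Nat.exists_card_divisors_le_mul_rpow (δ := δ) (by positivity)
  refine ⟨C ^ r, fun K hK => ?_⟩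
  set box := Fintype.piFinset fun _ : Fin r => Icc 1 K
  have hK1 : (1 : ℝ) ≤ K := by exact_mod_cast hK
  have hδ : r * δ * r ≤ ε := by
    rw [mul_right_comm, ← sq, mul_div_assoc', div_le_iff₀ (by positivity)]
    nlinarith
  have hfiber : ∀ x ∈ box, (#{y ∈ box | ∏ i, y i = ∏ i, x i} : ℝ) ≤ C ^ r * K ^ ε := by
    intro x hx
    obtain ⟨hpos, hle⟩ := mem_Icc.mp (prod_mem_Icc_of_mem_piFinset hx)
    have hprod_le : ((∏ i, x i : ℕ) : ℝ) ≤ (K : ℝ) ^ r := by simpa using (Nat.cast_le (α := ℝ)).mpr hle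
    calc (#{y ∈ box | ∏ i, y i = ∏ i, x i} : ℝ) ≤ (#(∏ i, x i).divisors : ℝ) ^ r := by
          simpa using (Nat.cast_le (α := ℝ)).mpr (card_filter_prod_eq_le box (by omega))
      _ ≤ (C * ((K : ℝ) ^ r) ^ δ) ^ r := by
          gcongr
          exact (hC _ (by omega)).trans (by gcongr)
      _ = C ^ r * K ^ (r * δ * r) := by
          rw [mul_pow, ← rpow_natCast_mul (by positivity), ← rpow_mul_natCast (by positivity)]
      _ ≤ C ^ r * K ^ ε := by gcongr
  have hbox : (#box : ℝ) = (K : ℝ) ^ (r : ℝ) := by simp [box]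
  rw [productEqCount_eq_card]
  calc _ ≤ #box * (C ^ r * (K : ℝ) ^ ε) := card_filter_product_apply_eq_le box _ hfiber
    _ = C ^ r * (K : ℝ) ^ ((r : ℝ) + ε) := by
      rw [hbox, rpow_add (by positivity)]
      ring

/-- Lemma: fix a positive integer `r`. For every `ε > 0` there is a constant `C = C(r, ε)`
such that `R_r(K) ≤ C K^{r+ε}` for every positive integer `K`. -/
theorem product_equation_count_bound (r : ℕ) (hr : 1 ≤ r) (ε : ℝ) (hε : 0 < ε) :
    ∃ C : ℝ, ∀ K : ℕ, 1 ≤ K →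
      (productEqCount r K : ℝ) ≤ C * (K : ℝ) ^ ((r : ℝ) + ε) :=
  product_equation_count_bound_general r ε hε
end

section
/- Fix a positive integer r. For every real ε > 0 there exists a constant C = C(r, ε) such that for all sufficiently large integers K and Q with 1 ≤ K ≤ Q, (1/Q) · Σ_{Q ≤ q ≤ 2Q} R_r(q;K) ≤ C (K^{2r} Q^{-1} + K^r) Q^ε, where the sum is over integers q in [Q, 2Q]. -/
open Finset

/-- `R_r(q;K)`: the number of `2r`-tuples `(x₁, …, x_{2r})` of integers with
`1 ≤ x₁, …, x_{2r} ≤ K` satisfying `x₁ ⋯ x_r ≡ x_{r+1} ⋯ x_{2r} (mod q)`. The tuple is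
encoded as a pair of `r`-tuples. -/
noncomputable def productCongCount (r q K : ℕ) : ℕ :=
  Set.ncard {p : (Fin r → ℕ) × (Fin r → ℕ) |
    (∀ i, 1 ≤ p.1 i ∧ p.1 i ≤ K) ∧ (∀ i, 1 ≤ p.2 i ∧ p.2 i ≤ K) ∧
    ((∏ i, p.1 i : ℕ) : ZMod q) = ((∏ i, p.2 i : ℕ) : ZMod q)}

open Filter Real

/-!
Swapping the two sums, `∑_q R_r(q;K)` counts pairs of tuples `x, y ∈ [1, K]^r` together with a
modulus `q ∈ [Q, 2Q]` dividing `∏ x - ∏ y`. If the products differ, `q` is one of the divisors of a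
nonzero integer below `K^r`; if they agree, `q` is free (`Q + 1` choices) but `y` is one of at most
`τ(∏ x)^r` tuples with the given product. The divisor bound `τ(n) ≪_δ n^δ` makes both costs
`≪ Q^ε`, giving `K^(2r) Q^ε + Q K^r Q^ε`.
-/

lemma exists_succ_le_mul_pow {t : ℝ} (ht : 1 < t) :
    ∃ B : ℝ, 1 ≤ B ∧ ∀ k : ℕ, (k + 1 : ℝ) ≤ B * t ^ k := by
  refine ⟨max 1 (t - 1)⁻¹, le_max_left _ _, fun k => ?_⟩
  have hB : 1 ≤ max 1 (t - 1)⁻¹ * (t - 1) :=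
    calc 1 = (t - 1)⁻¹ * (t - 1) := (inv_mul_cancel₀ (sub_pos.mpr ht).ne').symm
      _ ≤ _ := by gcongr; exact le_max_right _ _
  have hbern : 1 + k * (t - 1) ≤ t ^ k := by
    simpa using one_add_mul_le_pow (a := t - 1) (by linarith) k
  nlinarith [le_max_left 1 (t - 1)⁻¹, (k.cast_nonneg : (0 : ℝ) ≤ k)]

lemma succ_le_pow_of_two_le {t : ℝ} (ht : 2 ≤ t) (k : ℕ) : (k + 1 : ℝ) ≤ t ^ k :=
  calc (k + 1 : ℝ) ≤ 2 ^ k := by exact_mod_cast Nat.lt_two_pow_self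
    _ ≤ t ^ k := pow_le_pow_left₀ zero_le_two ht k

lemma Nat.cast_rpow_eq_prod_primeFactors {n : ℕ} (hn : n ≠ 0) (δ : ℝ) :
    (n : ℝ) ^ δ = ∏ p ∈ n.primeFactors, ((p : ℝ) ^ δ) ^ n.factorization p := by
  conv_lhs => rw [← Nat.prod_factorization_pow_eq_self hn]
  rw [Finsupp.prod, Nat.support_factorization, Nat.cast_prod,
    ← Real.finsetProd_rpow _ _ fun p _ => by positivity]
  refine prod_congr rfl fun p _ => ?_
  rw [Nat.cast_pow, Real.rpow_pow_comm p.cast_nonneg]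

theorem Nat.card_divisors_le_mul_rpow {δ : ℝ} (hδ : 0 < δ) :
    ∃ C : ℝ, 1 ≤ C ∧ ∀ n : ℕ, (#n.divisors : ℝ) ≤ C * (n : ℝ) ^ δ := by
  obtain ⟨P, hP⟩ : ∃ P : ℕ, ∀ p ≥ P, (2 : ℝ) ≤ (p : ℝ) ^ δ := eventually_atTop.mp <|
    ((tendsto_rpow_atTop hδ).comp tendsto_natCast_atTop_atTop).eventually_ge_atTop 2
  obtain ⟨B, hB1, hB⟩ := exists_succ_le_mul_pow (one_lt_rpow (by norm_num : (1 : ℝ) < 2) hδ)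
  -- The prime power `p ^ k ∥ n` contributes `(k + 1) / p ^ (k δ)` to `#n.divisors / n ^ δ`:
  -- at most `1` once `p ^ δ ≥ 2`, and at most `B` for each of the finitely many primes below.
  set c : ℕ → ℝ := fun p => if p < P then B else 1
  have hfactor : ∀ p : ℕ, p.Prime → ∀ k : ℕ, (k + 1 : ℝ) ≤ c p * ((p : ℝ) ^ δ) ^ k := by
    intro p hp k
    by_cases hpP : p < P
    · calc (k + 1 : ℝ) ≤ B * ((2 : ℝ) ^ δ) ^ k := hB k
        _ ≤ c p * ((p : ℝ) ^ δ) ^ k := by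
          simp only [c, if_pos hpP]
          gcongr
          exact_mod_cast hp.two_le
    · simpa [c, hpP] using succ_le_pow_of_two_le (hP p (not_lt.mp hpP)) k
  refine ⟨B ^ P, one_le_pow₀ hB1, fun n => ?_⟩
  rcases eq_or_ne n 0 with rfl | hn
  · simp only [Nat.divisors_zero, card_empty, Nat.cast_zero]
    positivity
  calc (#n.divisors : ℝ) = ∏ p ∈ n.primeFactors, ((n.factorization p : ℝ) + 1) := by
        rw [Nat.card_divisors hn]; push_cast; rfl
    _ ≤ ∏ p ∈ n.primeFactors, c p * ((p : ℝ) ^ δ) ^ n.factorization p :=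
        prod_le_prod (fun _ _ => by positivity)
          fun p hp => hfactor p (Nat.prime_of_mem_primeFactors hp) _
    _ = (∏ p ∈ n.primeFactors, c p) * (n : ℝ) ^ δ := by
        rw [prod_mul_distrib, Nat.cast_rpow_eq_prod_primeFactors hn]
    _ ≤ B ^ P * (n : ℝ) ^ δ := by
        gcongr
        rw [prod_ite, prod_const, prod_const_one, mul_one]
        refine pow_le_pow_right₀ hB1 ((card_le_card fun p hp => ?_).trans (card_range P).le)
        exact mem_range.mpr (mem_filter.mp hp).2

def maxDivisorCount (N : ℕ) : ℕ := (Iic N).sup fun n => #n.divisors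

lemma card_divisors_le_maxDivisorCount {n N : ℕ} (h : n ≤ N) : #n.divisors ≤ maxDivisorCount N :=
  le_sup (f := fun n => #n.divisors) (mem_Iic.mpr h)

lemma maxDivisorCount_le_mul_rpow {C δ : ℝ} (hC0 : 0 ≤ C) (hδ : 0 ≤ δ)
    (hC : ∀ n : ℕ, (#n.divisors : ℝ) ≤ C * (n : ℝ) ^ δ) (N : ℕ) :
    (maxDivisorCount N : ℝ) ≤ C * (N : ℝ) ^ δ := by
  obtain ⟨n, hn, hmax⟩ := exists_mem_eq_sup (Iic N) nonempty_Iic fun n => #n.divisors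
  rw [maxDivisorCount, hmax]
  exact (hC n).trans (by gcongr; exact mem_Iic.mp hn)

lemma card_filter_eq_prod_le {ι : Type*} [Fintype ι] [DecidableEq ι] (s : Finset (ι → ℕ))
    {m : ℕ} (hm : m ≠ 0) : #{y ∈ s | m = ∏ i, y i} ≤ #m.divisors ^ Fintype.card ι := by
  rw [← card_univ, ← prod_const, ← Fintype.card_piFinset]
  refine card_le_card fun y hy => Fintype.mem_piFinset.mpr fun i => ?_
  obtain ⟨-, rfl⟩ := mem_filter.mp hy
  exact Nat.mem_divisors.mpr ⟨dvd_prod_of_mem _ (mem_univ i), hm⟩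

lemma card_filter_natCast_eq_le (s : Finset ℕ) {a b : ℕ} (hab : a ≠ b) :
    #{q ∈ s | (a : ZMod q) = b} ≤ #((b : ℤ) - a).natAbs.divisors := by
  refine card_le_card fun q hq => Nat.mem_divisors.mpr ⟨?_, by omega⟩
  exact Int.natCast_dvd.mp <| Nat.modEq_iff_dvd.mp <|
    (ZMod.natCast_eq_natCast_iff _ _ _).mp (mem_filter.mp hq).2

section BoxTuples

variable (r K : ℕ)

def boxTuples : Finset (Fin r → ℕ) := Fintype.piFinset fun _ => Icc 1 K

lemma card_boxTuples : #(boxTuples r K) = K ^ r := by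
  simp [boxTuples]

variable {r K} in
lemma prod_mem_Icc_of_mem_boxTuples {x : Fin r → ℕ} (hx : x ∈ boxTuples r K) :
    ∏ i, x i ∈ Icc 1 (K ^ r) := by
  simp only [boxTuples, Fintype.mem_piFinset, mem_Icc] at hx
  refine mem_Icc.mpr ⟨one_le_prod' fun i _ => (hx i).1, ?_⟩
  exact (prod_le_prod' fun i _ => (hx i).2).trans_eq (by simp)

lemma productCongCount_eq_card_filter (q : ℕ) :
    productCongCount r q K = #{p ∈ boxTuples r K ×ˢ boxTuples r K |
      ((∏ i, p.1 i : ℕ) : ZMod q) = ((∏ i, p.2 i : ℕ) : ZMod q)} := by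
  rw [productCongCount, ← Set.ncard_coe_finset]
  congr 1
  ext p
  simp [boxTuples, and_assoc]

lemma card_filter_prod_eq_prod_le :
    #{p ∈ boxTuples r K ×ˢ boxTuples r K | ∏ i, p.1 i = ∏ i, p.2 i} ≤
      K ^ r * maxDivisorCount (K ^ r) ^ r := by
  rw [card_filter, sum_product]
  refine (sum_le_card_nsmul _ _ (maxDivisorCount (K ^ r) ^ r) fun x hx => ?_).trans_eq
    (by rw [card_boxTuples, smul_eq_mul])
  have hprod := mem_Icc.mp (prod_mem_Icc_of_mem_boxTuples hx)
  rw [← card_filter]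
  calc _ ≤ #(∏ i, x i).divisors ^ Fintype.card (Fin r) :=
        card_filter_eq_prod_le _ (by omega)
    _ ≤ maxDivisorCount (K ^ r) ^ r := by
        rw [Fintype.card_fin]
        exact Nat.pow_le_pow_left (card_divisors_le_maxDivisorCount hprod.2) r

end BoxTuples

lemma sum_productCongCount_le (r K : ℕ) (s : Finset ℕ) :
    ∑ q ∈ s, productCongCount r q K ≤
      #s * (K ^ r * maxDivisorCount (K ^ r) ^ r) + K ^ (2 * r) * maxDivisorCount (K ^ r) := by
  set T := boxTuples r K ×ˢ boxTuples r K
  have hswap : ∑ q ∈ s, productCongCount r q K = ∑ p ∈ T,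
      #{q ∈ s | ((∏ i, p.1 i : ℕ) : ZMod q) = ((∏ i, p.2 i : ℕ) : ZMod q)} := by
    simp_rw [productCongCount_eq_card_filter]
    exact sum_card_bipartiteAbove_eq_sum_card_bipartiteBelow _
  rw [hswap, ← sum_filter_add_sum_filter_not T fun p => ∏ i, p.1 i = ∏ i, p.2 i]
  gcongr ?_ + ?_
  · calc _ ≤ #{p ∈ T | ∏ i, p.1 i = ∏ i, p.2 i} • #s :=
          sum_le_card_nsmul _ _ _ fun p _ => card_filter_le _ _
      _ ≤ _ := by
          rw [smul_eq_mul, mul_comm]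
          exact Nat.mul_le_mul_left _ (card_filter_prod_eq_prod_le r K)
  · calc _ ≤ #{p ∈ T | ¬∏ i, p.1 i = ∏ i, p.2 i} • maxDivisorCount (K ^ r) := by
          refine sum_le_card_nsmul _ _ _ fun p hp => ?_
          obtain ⟨hpT, hne⟩ := mem_filter.mp hp
          have h1 := mem_Icc.mp (prod_mem_Icc_of_mem_boxTuples (mem_product.mp hpT).1)
          have h2 := mem_Icc.mp (prod_mem_Icc_of_mem_boxTuples (mem_product.mp hpT).2)
          exact (card_filter_natCast_eq_le s hne).trans
            (card_divisors_le_maxDivisorCount (by omega))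
      _ ≤ #T * maxDivisorCount (K ^ r) := by
          rw [smul_eq_mul]
          exact Nat.mul_le_mul_right _ (card_filter_le _ _)
      _ = K ^ (2 * r) * maxDivisorCount (K ^ r) := by
          rw [card_product, card_boxTuples, two_mul, pow_add]

lemma average_productCongCount_Icc_le (r K : ℕ) {Q : ℕ} (hQ : 1 ≤ Q) :
    (1 / (Q : ℝ)) * ∑ q ∈ Icc Q (2 * Q), (productCongCount r q K : ℝ) ≤
      2 * ((K : ℝ) ^ (2 * r) * (Q : ℝ)⁻¹ + (K : ℝ) ^ r) *
        ((max (maxDivisorCount (K ^ r)) (maxDivisorCount (K ^ r) ^ r) : ℕ) : ℝ) := by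
  set D := maxDivisorCount (K ^ r)
  set M : ℝ := ((max D (D ^ r) : ℕ) : ℝ)
  have hDM : (D : ℝ) ≤ M := Nat.cast_le.mpr (le_max_left _ _)
  have hDrM : (D : ℝ) ^ r ≤ M := by
    rw [← Nat.cast_pow]
    exact Nat.cast_le.mpr (le_max_right _ _)
  have hQ' : (1 : ℝ) ≤ Q := by exact_mod_cast hQ
  have hsum : ∑ q ∈ Icc Q (2 * Q), (productCongCount r q K : ℝ) ≤
      (Q + 1) * (K ^ r * D ^ r) + K ^ (2 * r) * D := by
    have h := sum_productCongCount_le r K (Icc Q (2 * Q))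
    rw [Nat.card_Icc, show 2 * Q + 1 - Q = Q + 1 by omega] at h
    exact_mod_cast h
  calc (1 / (Q : ℝ)) * ∑ q ∈ Icc Q (2 * Q), (productCongCount r q K : ℝ)
      ≤ (1 / Q) * ((Q + 1) * (K ^ r * M) + K ^ (2 * r) * M) := by
        gcongr
        exact hsum.trans (by gcongr)
    _ = ((1 + (Q : ℝ)⁻¹) * K ^ r + K ^ (2 * r) * (Q : ℝ)⁻¹) * M := by
        field_simp
    _ ≤ (2 * K ^ r + K ^ (2 * r) * (Q : ℝ)⁻¹) * M := by
        gcongr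
        linarith [inv_le_one_of_one_le₀ hQ']
    _ ≤ 2 * ((K : ℝ) ^ (2 * r) * (Q : ℝ)⁻¹ + (K : ℝ) ^ r) * M := by
        nlinarith [show 0 ≤ (K : ℝ) ^ (2 * r) * (Q : ℝ)⁻¹ * M by positivity]

theorem exists_maxDivisorCount_pow_le (r : ℕ) {ε : ℝ} (hε : 0 < ε) :
    ∃ C : ℝ, ∀ K Q : ℕ, 1 ≤ Q → K ≤ Q →
      ((max (maxDivisorCount (K ^ r)) (maxDivisorCount (K ^ r) ^ r) : ℕ) : ℝ) ≤
        C * (Q : ℝ) ^ ε := by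
  -- `δ` is small enough that the `r`-th power of the divisor bound costs at most `Q ^ ε`.
  set δ := ε / (r ^ 2 + 1)
  have hδ : 0 < δ := by positivity
  obtain ⟨C, hC1, hC⟩ := Nat.card_divisors_le_mul_rpow hδ
  refine ⟨C ^ (r + 1), fun K Q hQ hKQ => ?_⟩
  set η := (Q : ℝ) ^ δ
  have hη : 1 ≤ η := Real.one_le_rpow (by exact_mod_cast hQ) hδ.le
  have hηε : η ^ (r ^ 2 + 1) = (Q : ℝ) ^ ε := by
    rw [← Real.rpow_mul_natCast (by positivity)]
    push_cast
    rw [div_mul_cancel₀ ε (by positivity)]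
  set D := maxDivisorCount (K ^ r)
  have hD : (D : ℝ) ≤ C * η ^ r := by
    refine (maxDivisorCount_le_mul_rpow (by positivity) hδ.le hC _).trans ?_
    rw [Real.rpow_pow_comm (by positivity)]
    gcongr
    push_cast
    gcongr
  have hDpow : ∀ j ≤ r + 1, r * j ≤ r ^ 2 + 1 → (D : ℝ) ^ j ≤ C ^ (r + 1) * Q ^ ε := by
    intro j hj hrj
    calc (D : ℝ) ^ j ≤ (C * η ^ r) ^ j := by gcongr
      _ = C ^ j * η ^ (r * j) := by ring
      _ ≤ C ^ (r + 1) * η ^ (r ^ 2 + 1) := by gcongr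
      _ = C ^ (r + 1) * Q ^ ε := by rw [hηε]
  rw [Nat.cast_max, Nat.cast_pow]
  exact max_le (by simpa using hDpow 1 (by omega) (by nlinarith))
    (hDpow r (by omega) (by nlinarith))

theorem product_congruence_count_average_bound_general (r : ℕ) (ε : ℝ) (hε : 0 < ε) :
    ∃ C : ℝ, ∃ n₀ : ℕ, 1 ≤ n₀ ∧ ∀ K Q : ℕ, n₀ ≤ K → K ≤ Q →
      (1 / (Q : ℝ)) * ∑ q ∈ Finset.Icc Q (2 * Q), (productCongCount r q K : ℝ) ≤
        C * ((K : ℝ) ^ (2 * r) * (Q : ℝ)⁻¹ + (K : ℝ) ^ r) * (Q : ℝ) ^ ε := by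
  obtain ⟨C, hC⟩ := exists_maxDivisorCount_pow_le r hε
  refine ⟨2 * C, 1, le_rfl, fun K Q hK hKQ => ?_⟩
  have hQ : 1 ≤ Q := hK.trans hKQ
  calc _ ≤ 2 * ((K : ℝ) ^ (2 * r) * (Q : ℝ)⁻¹ + (K : ℝ) ^ r) *
          ((max (maxDivisorCount (K ^ r)) (maxDivisorCount (K ^ r) ^ r) : ℕ) : ℝ) :=
        average_productCongCount_Icc_le r K hQ
    _ ≤ 2 * ((K : ℝ) ^ (2 * r) * (Q : ℝ)⁻¹ + (K : ℝ) ^ r) * (C * (Q : ℝ) ^ ε) := by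
        gcongr
        exact hC K Q hQ hKQ
    _ = _ := by ring

/-- Lemma (average of `R_r(q;K)` over `q ∈ [Q, 2Q]`): fix a positive integer `r`. For every
`ε > 0` there is a constant `C = C(r, ε)` such that for all sufficiently large integers
`1 ≤ K ≤ Q`, `(1/Q) ∑_{Q ≤ q ≤ 2Q} R_r(q;K) ≤ C (K^{2r} Q^{-1} + K^r) Q^ε`. -/
theorem product_congruence_count_average_bound (r : ℕ) (hr : 1 ≤ r) (ε : ℝ) (hε : 0 < ε) :
    ∃ C : ℝ, ∃ n₀ : ℕ, 1 ≤ n₀ ∧ ∀ K Q : ℕ, n₀ ≤ K → K ≤ Q →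
      (1 / (Q : ℝ)) * ∑ q ∈ Finset.Icc Q (2 * Q), (productCongCount r q K : ℝ) ≤
        C * ((K : ℝ) ^ (2 * r) * (Q : ℝ)⁻¹ + (K : ℝ) ^ r) * (Q : ℝ) ^ ε :=
  product_congruence_count_average_bound_general r ε hε
end
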